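/- Let j₀, j_a, j_b be compatible positive complex structures on (E, ω), with associated maps μ_a, μ_b : Λ^{1,0}_{j₀}E* → Λ^{0,1}_{j₀}E*. For a compatible positive complex structure j with associated map μ, let I_j : Λ^{n,0}_{j₀}E* → Λ^{n,0}_j E* be the ℂ-linear isomorphism determined by I_j(α¹ ∧ … ∧ αⁿ) = (α¹ + μ(α¹)) ∧ … ∧ (αⁿ + μ(αⁿ)) for α¹, …, αⁿ ∈ Λ^{1,0}_{j₀}E* (the n-th exterior power of the graph map α ↦ α + μ(α), which carries Λ^{1,0}_{j₀}E* isomorphically onto Λ^{1,0}_j E*). Then I_{j_b}^{−1} ∘ Ψ_{j_a,j_b} ∘ I_{j_a} : Λ^{n,0}_{j₀}E* → Λ^{n,0}_{j₀}E* is scalar multiplication by det M(μ_a, μ_a) · det M(μ_a, μ_b)^{−1}, the determinants being those of ℂ-linear endomorphisms of E* ⊗ ℂ. -/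

import Mathlib

open Complex

noncomputable section

variable {E : Type*} [AddCommGroup E] [Module ℝ E]

/-- `j` is a complex structure on `E`: `j ∘ j = -id`. -/
def IsCplxStruct (j : E →ₗ[ℝ] E) : Prop := ∀ x : E, j (j x) = -x

/-- `j` is compatible with the symplectic form `ω`. -/
def OmCompat (ω : E [⋀^Fin 2]→ₗ[ℝ] ℝ) (j : E →ₗ[ℝ] E) : Prop :=
  ∀ x y : E, ω ![j x, j y] = ω ![x, y]

/-- `j` is positive with respect to `ω`. -/
def OmPos (ω : E [⋀^Fin 2]→ₗ[ℝ] ℝ) (j : E →ₗ[ℝ] E) : Prop :=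
  ∀ x : E, x ≠ 0 → 0 < ω ![x, j x]

/-- `ω` is nondegenerate. -/
def OmNondeg (ω : E [⋀^Fin 2]→ₗ[ℝ] ℝ) : Prop :=
  ∀ x : E, (∀ y : E, ω ![x, y] = 0) → x = 0

/-- The complex conjugate of a `ℂ`-valued alternating form. -/
def conjAlt {p : ℕ} (α : E [⋀^Fin p]→ₗ[ℝ] ℂ) : E [⋀^Fin p]→ₗ[ℝ] ℂ :=
  Complex.conjAe.toLinearMap.compAlternatingMap α

/-- Wedge product of `ℂ`-valued alternating forms. -/
def wedgeC {p q : ℕ} (α : E [⋀^Fin p]→ₗ[ℝ] ℂ) (β : E [⋀^Fin q]→ₗ[ℝ] ℂ) :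
    E [⋀^Fin (p + q)]→ₗ[ℝ] ℂ :=
  ((LinearMap.mul' ℝ ℂ).compAlternatingMap (α.domCoprod β)).domDomCongr finSumFinEquiv

/-- The complexification of a real-valued alternating form. -/
def cplxForm {p : ℕ} (ω : E [⋀^Fin p]→ₗ[ℝ] ℝ) : E [⋀^Fin p]→ₗ[ℝ] ℂ :=
  (Algebra.linearMap ℝ ℂ).compAlternatingMap ω

/-- `ω^{∧ m}`. -/
def omPow (ω : E [⋀^Fin 2]→ₗ[ℝ] ℝ) : (m : ℕ) → E [⋀^Fin (2 * m)]→ₗ[ℝ] ℂ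
  | 0 => (AlternatingMap.constOfIsEmpty ℝ E (Fin 0) 1).domDomCongr (finCongr (by ring))
  | (m + 1) => (wedgeC (cplxForm ω) (omPow ω m)).domDomCongr (finCongr (by ring))

/-- `ω^{∧ n}`, reindexed by `Fin (n + n)`. -/
def topPow (ω : E [⋀^Fin 2]→ₗ[ℝ] ℝ) (n : ℕ) : E [⋀^Fin (n + n)]→ₗ[ℝ] ℂ :=
  (omPow ω n).domDomCongr (finCongr (by ring))

/-- `Λ^{n,0}_j E*`: the space of `ℂ`-valued alternating `p`-forms `α` with
`α (j v₁, v₂, …, v_p) = i • α (v₁, …, v_p)`. -/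
def Lam (j : E →ₗ[ℝ] E) (p : ℕ) : Submodule ℂ (E [⋀^Fin p]→ₗ[ℝ] ℂ) where
  carrier := {α | ∀ (v : Fin p → E) (i : Fin p), (i : ℕ) = 0 →
    α (Function.update v i (j (v i))) = Complex.I * α v}
  add_mem' := by
    intro a b ha hb v i hi
    simp only [AlternatingMap.add_apply, ha v i hi, hb v i hi]
    ring
  zero_mem' := by
    intro v i hi
    simp
  smul_mem' := by
    intro c a ha v i hi
    simp only [AlternatingMap.smul_apply, ha v i hi, smul_eq_mul]
    ring

/-- The scalar `α ∧ β̄ / ω^{∧ n}`. -/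
def pairing (ω : E [⋀^Fin 2]→ₗ[ℝ] ℝ) (n : ℕ) (α β : E [⋀^Fin n]→ₗ[ℝ] ℂ) : ℂ :=
  letI := Classical.propDecidable (∃ c : ℂ, wedgeC α (conjAlt β) = c • topPow ω n)
  if h : ∃ c : ℂ, wedgeC α (conjAlt β) = c • topPow ω n then h.choose else 0

/-- `Λ^{1,0}_j E*`: `ℂ`-valued `ℝ`-linear forms with `α (j v) = i · α v`. -/
def Lam10 (j : E →ₗ[ℝ] E) : Submodule ℂ (E →ₗ[ℝ] ℂ) where
  carrier := {α | ∀ x : E, α (j x) = Complex.I * α x}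
  add_mem' := by
    intro a b ha hb x
    simp only [LinearMap.add_apply, ha x, hb x]; ring
  zero_mem' := by intro x; simp
  smul_mem' := by
    intro c a ha x
    simp only [LinearMap.smul_apply, ha x, smul_eq_mul]; ring

/-- `Λ^{0,1}_j E*`: `ℂ`-valued `ℝ`-linear forms with `α (j v) = -i · α v`. -/
def Lam01 (j : E →ₗ[ℝ] E) : Submodule ℂ (E →ₗ[ℝ] ℂ) where
  carrier := {α | ∀ x : E, α (j x) = -(Complex.I * α x)}
  add_mem' := by
    intro a b ha hb x
    simp only [LinearMap.add_apply, ha x, hb x]; ring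
  zero_mem' := by intro x; simp
  smul_mem' := by
    intro c a ha x
    simp only [LinearMap.smul_apply, ha x, smul_eq_mul]; ring

/-- The conjugate of a `ℂ`-valued `ℝ`-linear form. -/
def conjForm (α : E →ₗ[ℝ] ℂ) : E →ₗ[ℝ] ℂ :=
  Complex.conjAe.toLinearMap ∘ₗ α

/-- The endomorphism `M(μ, ν)` of `E* ⊗ ℂ ≃ Λ^{1,0}_{j₀}E* ⊕ Λ^{0,1}_{j₀}E*`,
`(α, β) ↦ (α + μ̄(β), ν(α) + β)`, expressed relative to the splitting
(with `μ̄` given as the first argument). -/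
def Mmat (j₀ : E →ₗ[ℝ] E) (μbar : Lam01 j₀ →ₗ[ℂ] Lam10 j₀)
    (ν : Lam10 j₀ →ₗ[ℂ] Lam01 j₀) :
    (Lam10 j₀ × Lam01 j₀) →ₗ[ℂ] (Lam10 j₀ × Lam01 j₀) :=
  LinearMap.prod
    (LinearMap.fst ℂ (Lam10 j₀) (Lam01 j₀) +
      μbar ∘ₗ LinearMap.snd ℂ (Lam10 j₀) (Lam01 j₀))
    (ν ∘ₗ LinearMap.fst ℂ (Lam10 j₀) (Lam01 j₀) +
      LinearMap.snd ℂ (Lam10 j₀) (Lam01 j₀))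

/-- A `ℂ`-valued `ℝ`-linear form viewed as an alternating `1`-form. -/
def oneAlt (f : E →ₗ[ℝ] ℂ) : E [⋀^Fin 1]→ₗ[ℝ] ℂ :=
  AlternatingMap.ofSubsingleton ℝ E ℂ (0 : Fin 1) f

/-- The wedge product `α¹ ∧ … ∧ α^p` of a family of `1`-forms. -/
def wedgeFam : (p : ℕ) → (Fin p → (E →ₗ[ℝ] ℂ)) → E [⋀^Fin p]→ₗ[ℝ] ℂ
  | 0, _ => AlternatingMap.constOfIsEmpty ℝ E (Fin 0) 1
  | (p + 1), f =>
      (wedgeC (oneAlt (f 0)) (wedgeFam p (fun i => f i.succ))).domDomCongr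
        (finCongr (by omega))

/-- The defining property of `Ψ_{j_a,j_b}`. -/
def PsiProp (ω : E [⋀^Fin 2]→ₗ[ℝ] ℝ) (n : ℕ) (ja jb : E →ₗ[ℝ] E)
    (Ψ : Lam ja n →ₗ[ℂ] Lam jb n) : Prop :=
  ∀ α β : Lam ja n,
    wedgeC ((Ψ α : E [⋀^Fin n]→ₗ[ℝ] ℂ)) (conjAlt (β : E [⋀^Fin n]→ₗ[ℝ] ℂ)) =
      wedgeC (α : E [⋀^Fin n]→ₗ[ℝ] ℂ) (conjAlt (β : E [⋀^Fin n]→ₗ[ℝ] ℂ))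

section AuxDet

variable {E : Type*} [AddCommGroup E] [Module ℝ E]

/-- The multilinear map `v ↦ ∏ i, F i (v i)`. -/
def prodMl {ι : Type*} [Fintype ι] (F : ι → (E →ₗ[ℝ] ℂ)) :
    MultilinearMap ℝ (fun _ : ι => E) ℂ :=
  (MultilinearMap.mkPiAlgebra ℝ ι ℂ).compLinearMap F

lemma prodMl_apply {ι : Type*} [Fintype ι] (F : ι → (E →ₗ[ℝ] ℂ)) (v : ι → E) :
    prodMl F v = ∏ i, F i (v i) := by
  simp [prodMl]

/-- The "determinant form" of a family of 1-forms. -/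
def detF {ι : Type*} [Fintype ι] [DecidableEq ι] (F : ι → (E →ₗ[ℝ] ℂ)) :
    E [⋀^ι]→ₗ[ℝ] ℂ :=
  MultilinearMap.alternatization (prodMl F)

lemma detF_apply {ι : Type*} [Fintype ι] [DecidableEq ι] (F : ι → (E →ₗ[ℝ] ℂ)) (v : ι → E) :
    detF F v = Matrix.det (Matrix.of fun i j => F j (v i)) := by
  rw [detF, MultilinearMap.alternatization_apply, Matrix.det_apply]
  refine Finset.sum_congr rfl fun σ _ => ?_
  rw [MultilinearMap.domDomCongr_apply, prodMl_apply]
  congr 1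

end AuxDet
section AuxWedge

variable {E : Type*} [AddCommGroup E] [Module ℝ E]

lemma detF_domDomCongr {ι κ : Type*} [Fintype ι] [DecidableEq ι] [Fintype κ] [DecidableEq κ]
    (e : ι ≃ κ) (F : ι → (E →ₗ[ℝ] ℂ)) :
    (detF F).domDomCongr e = detF (F ∘ e.symm) := by
  ext v
  rw [AlternatingMap.domDomCongr_apply, detF_apply, detF_apply]
  rw [show (Matrix.of fun i j => ((F ∘ e.symm) j) (v i)) =
      (Matrix.of fun i j => F j ((v ∘ e) i)).submatrix e.symm e.symm from by
    ext i j; simp, Matrix.det_submatrix_equiv_self]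

lemma wedgeC_detF {p q : ℕ} (F : Fin p → (E →ₗ[ℝ] ℂ)) (G : Fin q → (E →ₗ[ℝ] ℂ)) :
    wedgeC (detF F) (detF G) = (detF (Sum.elim F G)).domDomCongr finSumFinEquiv := by
  rw [wedgeC]
  congr 1
  have h1 : (detF F).domCoprod (detF G) =
      MultilinearMap.alternatization ((prodMl F).domCoprod (prodMl G)) := by
    rw [MultilinearMap.domCoprod_alternization]; rfl
  rw [h1, ← LinearMap.compMultilinearMap_alternatization]
  have h2 : (LinearMap.mul' ℝ ℂ).compMultilinearMap ((prodMl F).domCoprod (prodMl G)) =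
      prodMl (Sum.elim F G) := by
    ext v
    simp only [LinearMap.compMultilinearMap_apply, MultilinearMap.domCoprod_apply,
      LinearMap.mul'_apply, prodMl_apply]
    rw [Fintype.prod_sum_type]
    simp
  rw [h2]; rfl

lemma conjForm_apply (α : E →ₗ[ℝ] ℂ) (x : E) :
    conjForm α x = starRingEnd ℂ (α x) := rfl

lemma conjAlt_detF {p : ℕ} (F : Fin p → (E →ₗ[ℝ] ℂ)) :
    conjAlt (detF F) = detF (fun i => conjForm (F i)) := by
  ext v
  have : conjAlt (detF F) v = starRingEnd ℂ (detF F v) := rfl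
  rw [this, detF_apply, detF_apply, RingHom.map_det]
  congr 1

lemma oneAlt_eq_detF (g : E →ₗ[ℝ] ℂ) : oneAlt g = detF (fun _ : Fin 1 => g) := by
  ext v
  rw [detF_apply, Matrix.det_fin_one]
  rfl

lemma wedgeFam_eq_detF : ∀ (p : ℕ) (f : Fin p → (E →ₗ[ℝ] ℂ)), wedgeFam p f = detF f := by
  intro p
  induction p with
  | zero =>
    intro f
    ext v
    rw [detF_apply, Matrix.det_isEmpty]
    rfl
  | succ p ih =>
    intro f
    rw [wedgeFam, ih, oneAlt_eq_detF, wedgeC_detF, ← AlternatingMap.domDomCongr_trans,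
      detF_domDomCongr]
    congr 1
    refine funext fun k => ?_
    have key : ∀ a, f ((finSumFinEquiv.trans (finCongr (by omega : 1 + p = p + 1))) a) =
        Sum.elim (fun _ : Fin 1 => f 0) (fun i => f i.succ) a := by
      rintro (a | a)
      · have ha : ((finSumFinEquiv.trans (finCongr (by omega : 1 + p = p + 1)))
            (Sum.inl a)) = 0 := by
          have h0 : (a : ℕ) = 0 := by omega
          ext
          simp [h0]
        rw [ha]; rfl
      · have ha : ((finSumFinEquiv.trans (finCongr (by omega : 1 + p = p + 1)))
            (Sum.inr a)) = a.succ := by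
          ext
          simp [Nat.add_comm 1 a.val]
        rw [ha]; rfl
    have h2 := key ((finSumFinEquiv.trans (finCongr (by omega : 1 + p = p + 1))).symm k)
    rw [Equiv.apply_symm_apply] at h2
    exact h2.symm

end AuxWedge
section AuxLam

variable {E : Type*} [AddCommGroup E] [Module ℝ E]

lemma detF_mem_lam {n : ℕ} (j : E →ₗ[ℝ] E) (F : Fin n → (E →ₗ[ℝ] ℂ))
    (hF : ∀ i, F i ∈ Lam10 j) : detF F ∈ Lam j n := by
  intro v i hi
  rw [detF_apply, detF_apply]
  have hM : (Matrix.of fun r c => F c (Function.update v i (j (v i)) r)) =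
      Matrix.updateRow (Matrix.of fun r c => F c (v r)) i
        (Complex.I • fun c => F c (v i)) := by
    ext r c
    rcases eq_or_ne r i with h | h
    · subst h
      simp [Matrix.updateRow_apply, hF c (v r), Pi.smul_apply, smul_eq_mul]
    · simp [Matrix.updateRow_apply, h, Function.update_apply]
  rw [hM, Matrix.det_updateRow_smul]
  congr 1
  rw [show ((fun c => F c (v i)) : Fin n → ℂ) = (Matrix.of fun r c => F c (v r)) i from rfl,
    Matrix.updateRow_eq_self]

lemma detF_update_smul {ι : Type*} [Fintype ι] [DecidableEq ι] (F : ι → (E →ₗ[ℝ] ℂ)) (i : ι) (t : ℂ) :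
    detF (Function.update F i (t • F i)) = t • detF F := by
  ext v
  rw [AlternatingMap.smul_apply, detF_apply, detF_apply, smul_eq_mul]
  have hM : (Matrix.of fun r c => Function.update F i (t • F i) c (v r)) =
      Matrix.updateCol (Matrix.of fun r c => F c (v r)) i
        (t • fun r => F i (v r)) := by
    ext r c
    rcases eq_or_ne c i with h | h
    · subst h; simp [Matrix.updateCol_apply]
    · simp [Matrix.updateCol_apply, h, Function.update_apply]
  rw [hM, Matrix.det_updateCol_smul]
  congr 1
  rw [show ((fun r => F i (v r)) : ι → ℂ) = fun r => (Matrix.of fun r c => F c (v r)) r i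
    from rfl, Matrix.updateCol_eq_self]

/-- Members of `Lam j n` satisfy the `j`-linearity condition in every slot. -/
lemma lam_update {n : ℕ} (hn : 0 < n) (j : E →ₗ[ℝ] E) {δ : E [⋀^Fin n]→ₗ[ℝ] ℂ}
    (hδ : δ ∈ Lam j n) (v : Fin n → E) (k : Fin n) :
    δ (Function.update v k (j (v k))) = Complex.I * δ v := by
  set i0 : Fin n := ⟨0, hn⟩ with hi0
  rcases eq_or_ne k i0 with h | h
  · subst h; exact hδ v i0 rfl
  · set w := v ∘ Equiv.swap i0 k with hw
    have h1 : Function.update v k (j (v k)) = Function.update w i0 (j (w i0)) ∘ Equiv.swap i0 k := by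
      funext r
      rcases eq_or_ne r k with hr | hr
      · subst hr
        simp [hw, Function.update_apply, Equiv.swap_apply_right, h]
      · rcases eq_or_ne r i0 with hr2 | hr2
        · subst hr2
          simp [hw, Function.update_apply, Equiv.swap_apply_left, h, Ne.symm h]
        · have hs : Equiv.swap i0 k r = r := Equiv.swap_apply_of_ne_of_ne hr2 hr
          simp [hw, Function.update_apply, hs, hr, Ne.symm hr2, hr2]
    rw [h1, AlternatingMap.map_swap _ _ (Ne.symm h)]
    rw [hδ w i0 rfl]
    have h2 : δ w = -δ v := by
      rw [hw, AlternatingMap.map_swap _ _ (Ne.symm h)]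
    rw [h2]
    ring

end AuxLam

section ZeroWedge
variable {E : Type*} [AddCommGroup E] [Module ℝ E]

lemma wedgeC_zero_left {p q : ℕ} (β : E [⋀^Fin q]→ₗ[ℝ] ℂ) :
    wedgeC (0 : E [⋀^Fin p]→ₗ[ℝ] ℂ) β = 0 := by
  unfold wedgeC
  rw [show (0 : E [⋀^Fin p]→ₗ[ℝ] ℂ).domCoprod β = 0 from by
    rw [← AlternatingMap.domCoprod'_apply, TensorProduct.zero_tmul, map_zero]]
  ext v
  simp

end ZeroWedge
section AuxCplx

variable {E : Type*} [AddCommGroup E] [Module ℝ E]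

/-- The complex module structure on `E` induced by a complex structure `j`. -/
def cmod (j : E →ₗ[ℝ] E) (hj : IsCplxStruct j) : Module ℂ E :=
  letI : SMul ℂ E := ⟨fun c x => c.re • x + c.im • j x⟩
  Module.ofMinimalAxioms
    (fun c x y => by
      show c.re • (x + y) + c.im • j (x + y) =
        (c.re • x + c.im • j x) + (c.re • y + c.im • j y)
      rw [map_add]
      module)
    (fun c d x => by
      show (c + d).re • x + (c + d).im • j x =
        (c.re • x + c.im • j x) + (d.re • x + d.im • j x)
      rw [Complex.add_re, Complex.add_im]
      module)
    (fun c d x => by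
      show (c * d).re • x + (c * d).im • j x =
        c.re • (d.re • x + d.im • j x) + c.im • j (d.re • x + d.im • j x)
      rw [Complex.mul_re, Complex.mul_im, map_add, map_smul, map_smul, hj x]
      module)
    (fun x => by
      show (1 : ℂ).re • x + (1 : ℂ).im • j x = x
      simp)

lemma cmod_smul (j : E →ₗ[ℝ] E) (hj : IsCplxStruct j) (c : ℂ) (x : E) :
    (letI := cmod j hj; c • x) = c.re • x + c.im • j x := rfl

lemma cmod_tower (j : E →ₗ[ℝ] E) (hj : IsCplxStruct j) :
    letI := cmod j hj
    IsScalarTower ℝ ℂ E := by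
  letI := cmod j hj
  refine ⟨fun r c x => ?_⟩
  rw [cmod_smul j hj, cmod_smul j hj]
  have h1 : (r • c).re = r * c.re := by simp [Complex.smul_re]
  have h2 : (r • c).im = r * c.im := by simp [Complex.smul_im]
  rw [h1, h2]
  module

end AuxCplx
section AuxConj

variable {E : Type*} [AddCommGroup E] [Module ℝ E]

lemma conjForm_conjForm (α : E →ₗ[ℝ] ℂ) : conjForm (conjForm α) = α := by
  ext x; simp [conjForm_apply]

lemma conjForm_add (α β : E →ₗ[ℝ] ℂ) : conjForm (α + β) = conjForm α + conjForm β := by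
  ext x; simp [conjForm_apply]

lemma conjForm_smul (c : ℂ) (α : E →ₗ[ℝ] ℂ) :
    conjForm (c • α) = (starRingEnd ℂ c) • conjForm α := by
  ext x; simp [conjForm_apply]

lemma conjForm_mem_Lam01 {j : E →ₗ[ℝ] E} {α : E →ₗ[ℝ] ℂ} (hα : α ∈ Lam10 j) :
    conjForm α ∈ Lam01 j := by
  intro x
  rw [conjForm_apply, conjForm_apply, hα x]
  simp [mul_comm]

lemma conjForm_mem_Lam10 {j : E →ₗ[ℝ] E} {α : E →ₗ[ℝ] ℂ} (hα : α ∈ Lam01 j) :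
    conjForm α ∈ Lam10 j := by
  intro x
  rw [conjForm_apply, conjForm_apply, hα x]
  simp [mul_comm]

lemma isCompl_lam (j : E →ₗ[ℝ] E) (hj : IsCplxStruct j) :
    IsCompl (Lam10 j) (Lam01 (E := E) j) := by
  constructor
  · rw [disjoint_iff]
    ext α
    simp only [Submodule.mem_inf, Submodule.mem_bot]
    constructor
    · rintro ⟨h1, h2⟩
      ext x
      have := (h1 x).symm.trans (h2 x)
      have hx : Complex.I * α x = 0 := by
        have h3 : (2 : ℂ) * (Complex.I * α x) = 0 := by rw [two_mul]; linear_combination this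
        simpa using mul_eq_zero.mp h3
      simpa [Complex.I_ne_zero] using mul_eq_zero.mp hx
    · rintro rfl; exact ⟨Submodule.zero_mem _, Submodule.zero_mem _⟩
  · rw [codisjoint_iff, eq_top_iff]
    intro α _
    have h1 : ((2⁻¹ : ℂ) • (α - Complex.I • (α ∘ₗ j))) ∈ Lam10 j := by
      intro x
      simp only [LinearMap.smul_apply, LinearMap.sub_apply, LinearMap.comp_apply, smul_eq_mul]
      rw [hj x]
      simp only [map_neg]
      ring_nf
      rw [Complex.I_sq]
      ring
    have h2 : ((2⁻¹ : ℂ) • (α + Complex.I • (α ∘ₗ j))) ∈ Lam10 j → True := fun _ => trivial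
    have h2' : ((2⁻¹ : ℂ) • (α + Complex.I • (α ∘ₗ j))) ∈ Lam01 j := by
      intro x
      simp only [LinearMap.smul_apply, LinearMap.add_apply, LinearMap.comp_apply, smul_eq_mul]
      rw [hj x]
      simp only [map_neg]
      ring_nf
      rw [Complex.I_sq]
      ring
    have hsum : α = (2⁻¹ : ℂ) • (α - Complex.I • (α ∘ₗ j)) +
        (2⁻¹ : ℂ) • (α + Complex.I • (α ∘ₗ j)) := by
      ext x
      simp only [LinearMap.add_apply, LinearMap.smul_apply, LinearMap.sub_apply,
        LinearMap.comp_apply, smul_eq_mul]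
      ring
    rw [hsum]
    exact Submodule.add_mem_sup h1 h2'

end AuxConj
section AuxPackage

variable {E : Type*} [AddCommGroup E] [Module ℝ E]

lemma lam_package {n : ℕ} (hn : 0 < n) [FiniteDimensional ℝ E]
    (hdim : Module.finrank ℝ E = 2 * n) (j : E →ₗ[ℝ] E) (hj : IsCplxStruct j) :
    ∃ (b : Fin n → E) (Δ : E [⋀^Fin n]→ₗ[ℝ] ℂ) (e : Fin n → (E →ₗ[ℝ] ℂ)),
      (∀ δ ∈ Lam j n, δ = δ b • Δ) ∧
      (∀ i, e i ∈ Lam10 j) ∧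
      (∀ i k, e i (b k) = if i = k then 1 else 0) ∧
      (∀ α ∈ Lam10 j, α = ∑ i, α (b i) • e i) := by
  letI := cmod j hj
  haveI := cmod_tower j hj
  haveI : Module.Finite ℂ E := Module.Finite.of_restrictScalars_finite ℝ ℂ E
  have hIsmul : ∀ x : E, Complex.I • x = j x := by
    intro x
    rw [cmod_smul j hj]
    simp
  have hrank : Module.finrank ℂ E = n := by
    have h := Module.finrank_mul_finrank (F := ℝ) (K := ℂ) (A := E)
    rw [Complex.finrank_real_complex, hdim] at h
    omega
  let b : Module.Basis (Fin n) ℂ E := (Module.finBasis ℂ E).reindex (finCongr hrank)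
  -- the 1-forms
  let e : Fin n → (E →ₗ[ℝ] ℂ) := fun i => (b.coord i).restrictScalars ℝ
  have he_apply : ∀ (i : Fin n) (x : E), e i x = b.coord i x := fun _ _ => rfl
  have he_mem : ∀ i, e i ∈ Lam10 j := by
    intro i x
    rw [he_apply, he_apply, ← hIsmul x, map_smul]
    simp
  have he_eval : ∀ i k, e i (b k) = if i = k then 1 else 0 := by
    intro i k
    rw [he_apply]
    simp [Module.Basis.coord_apply, Module.Basis.repr_self, Finsupp.single_apply, eq_comm]
  -- the top form
  let Δ : E [⋀^Fin n]→ₗ[ℝ] ℂ :=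
    { toMultilinearMap := (b.det.toMultilinearMap).restrictScalars ℝ
      map_eq_zero_of_eq' := fun v i k h hne => b.det.map_eq_zero_of_eq v h hne }
  have hΔ_apply : ∀ v, Δ v = b.det v := fun _ => rfl
  refine ⟨⇑b, Δ, e, ?_, he_mem, he_eval, ?_⟩
  · intro δ hδ
    -- build the ℂ-alternating map
    let δml : MultilinearMap ℂ (fun _ : Fin n => E) ℂ :=
      { toFun := δ
        map_update_add' := fun m i x y => δ.map_update_add m i x y
        map_update_smul' := by
          intro instD m i c x
          have hinst : instD = instDecidableEqFin n := Subsingleton.elim _ _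
          subst hinst
          have hsmul : c • x = c.re • x + c.im • j x := cmod_smul j hj c x
          rw [hsmul, δ.map_update_add, δ.map_update_smul, δ.map_update_smul]
          have hupd : Function.update m i (j x) =
              Function.update (Function.update m i x) i
                (j ((Function.update m i x) i)) := by
            simp [Function.update_idem]
          rw [hupd, lam_update hn j hδ]
          rw [Complex.real_smul, Complex.real_smul]
          have h4 : c • δ (Function.update m i x) = c * δ (Function.update m i x) := rfl
          rw [h4]
          conv_rhs => rw [← Complex.re_add_im c]
          ring }
    let δc : E [⋀^Fin n]→ₗ[ℂ] ℂ :=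
      { toMultilinearMap := δml
        map_eq_zero_of_eq' := fun v i k h hne => δ.map_eq_zero_of_eq v h hne }
    have hkey := δc.eq_smul_basis_det b
    ext v
    have h1 := DFunLike.congr_fun hkey v
    simp only [AlternatingMap.smul_apply, smul_eq_mul] at h1 ⊢
    exact h1
  · intro α hα
    -- complex linear version of α
    let αc : E →ₗ[ℂ] ℂ :=
      { toFun := α
        map_add' := α.map_add
        map_smul' := by
          intro c x
          show α (c • x) = c * α x
          have hsmul : c • x = c.re • x + c.im • j x := cmod_smul j hj c x
          rw [hsmul, map_add, map_smul, map_smul, hα x]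
          rw [Complex.real_smul, Complex.real_smul]
          conv_rhs => rw [← Complex.re_add_im c]
          ring }
    ext x
    rw [LinearMap.sum_apply]
    have hrepr : αc = ∑ i, αc (b i) • (b.coord i : E →ₗ[ℂ] ℂ) := by
      refine b.ext fun k => ?_
      rw [LinearMap.sum_apply]
      rw [Finset.sum_eq_single k]
      · simp [Module.Basis.coord_apply, Module.Basis.repr_self]
      · intro i _ hik
        simp [Module.Basis.coord_apply, Module.Basis.repr_self, Finsupp.single_apply, Ne.symm hik]
      · intro h; exact absurd (Finset.mem_univ k) h
    have h2 := DFunLike.congr_fun hrepr x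
    simp only [LinearMap.sum_apply, LinearMap.smul_apply, smul_eq_mul] at h2 ⊢
    exact h2

end AuxPackage
section AuxNondeg

variable {E : Type*} [AddCommGroup E] [Module ℝ E]

lemma detF_ne_zero_of_linearIndependent {κ : Type*} [Fintype κ] [DecidableEq κ]
    [FiniteDimensional ℝ E] (hcard : Fintype.card κ = Module.finrank ℝ E)
    {B : κ → (E →ₗ[ℝ] ℂ)} (hB : LinearIndependent ℂ B) : detF B ≠ 0 := by
  let w : Module.Basis κ ℝ E := (Module.finBasis ℝ E).reindex
    (Fintype.equivOfCardEq (by simp [hcard]))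
  intro h0
  have hdet : Matrix.det (Matrix.of fun i j => B j (w i)) = 0 := by
    have := congrArg (fun (f : E [⋀^κ]→ₗ[ℝ] ℂ) => f ⇑w) h0
    simpa [detF_apply] using this
  obtain ⟨c, hc0, hc⟩ := Matrix.exists_mulVec_eq_zero_iff.mpr hdet
  have hβ : (∑ j, c j • B j) = 0 := by
    refine w.ext fun i => ?_
    have := congrFun hc i
    simp only [Matrix.mulVec, dotProduct, Matrix.of_apply, Pi.zero_apply] at this
    simp only [LinearMap.sum_apply, LinearMap.smul_apply, LinearMap.zero_apply, smul_eq_mul]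
    rw [← this]
    exact Finset.sum_congr rfl fun j _ => mul_comm _ _
  exact hc0 (funext (Fintype.linearIndependent_iff.mp hB c hβ))

lemma detF_comp_basis {κ : Type*} [Fintype κ] [DecidableEq κ]
    (b : Module.Basis κ ℂ (E →ₗ[ℝ] ℂ)) (T : (E →ₗ[ℝ] ℂ) →ₗ[ℂ] (E →ₗ[ℝ] ℂ)) :
    detF (fun i => T (b i)) = LinearMap.det T • detF ⇑b := by
  ext v
  rw [AlternatingMap.smul_apply, detF_apply, detF_apply, smul_eq_mul]
  set A := LinearMap.toMatrix b b T with hA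
  have hT : ∀ k, T (b k) = ∑ i, A i k • b i := by
    intro k
    have : ∀ i, A i k = b.repr (T (b k)) i := fun i => LinearMap.toMatrix_apply b b T i k
    simp_rw [this]
    exact (b.sum_repr (T (b k))).symm
  have hM : (Matrix.of fun r c => (T (b c)) (v r)) =
      (Matrix.of fun r c => b c (v r)) * A := by
    ext r c
    rw [Matrix.mul_apply, Matrix.of_apply, hT c, LinearMap.sum_apply]
    refine Finset.sum_congr rfl fun i _ => ?_
    simp [mul_comm]
  rw [hM, Matrix.det_mul, LinearMap.det_toMatrix]
  ring

lemma omega_surj [FiniteDimensional ℝ E] (ω : E [⋀^Fin 2]→ₗ[ℝ] ℝ) (hnd : OmNondeg ω)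
    (u : E →ₗ[ℝ] ℝ) : ∃ v : E, ∀ x, ω ![v, x] = u x := by
  have hupd0 : ∀ (a b z : E), Function.update ![a, b] 0 z = ![z, b] := by
    intro a b z; funext i; fin_cases i <;> simp
  have hupd1 : ∀ (a b z : E), Function.update ![a, b] 1 z = ![a, z] := by
    intro a b z; funext i; fin_cases i <;> simp
  let L : E →ₗ[ℝ] (E →ₗ[ℝ] ℝ) := LinearMap.mk₂ ℝ (fun a x => ω ![a, x])
    (fun a b x => by
      have h := ω.map_update_add ![a, x] 0 a b
      rwa [hupd0, hupd0, hupd0] at h)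
    (fun c a x => by
      have h := ω.map_update_smul ![a, x] 0 c a
      rwa [hupd0, hupd0] at h)
    (fun a x y => by
      have h := ω.map_update_add ![a, x] 1 x y
      rwa [hupd1, hupd1, hupd1] at h)
    (fun c a x => by
      have h := ω.map_update_smul ![a, x] 1 c x
      rwa [hupd1, hupd1] at h)
  have hinj : Function.Injective L := by
    rw [← LinearMap.ker_eq_bot, LinearMap.ker_eq_bot']
    intro v hv
    refine hnd v fun y => ?_
    exact DFunLike.congr_fun hv y
  have hsurj : Function.Surjective L :=
    (LinearMap.injective_iff_surjective_of_finrank_eq_finrank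
      (Subspace.dual_finrank_eq (K := ℝ) (V := E)).symm).mp hinj
  obtain ⟨v, hv⟩ := hsurj u
  exact ⟨v, fun x => DFunLike.congr_fun hv x⟩

lemma cancel_10 [FiniteDimensional ℝ E] (ω : E [⋀^Fin 2]→ₗ[ℝ] ℝ) (hnd : OmNondeg ω)
    (ja jb : E →ₗ[ℝ] E) (hpa : OmPos ω ja) (hpb : OmPos ω jb)
    {φ ψ : E →ₗ[ℝ] ℂ} (hφ : φ ∈ Lam10 jb) (hψ : ψ ∈ Lam10 ja)
    (h : ∀ x, φ x = -(starRingEnd ℂ) (ψ x)) : φ = 0 ∧ ψ = 0 := by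
  let u : E →ₗ[ℝ] ℝ :=
    { toFun := fun x => (φ x).re
      map_add' := by intro x y; simp
      map_smul' := by intro r x; simp [Complex.smul_re] }
  have key2 : ∀ x, φ (ja x) = -Complex.I * φ x := by
    intro x
    have h1 : (starRingEnd ℂ) (ψ x) = -φ x := by rw [h x]; ring
    rw [h (ja x), hψ x]
    rw [map_mul]
    rw [h1]
    simp [Complex.conj_I]
    try ring
  have key1 : ∀ x, u (jb x) = -(φ x).im := by
    intro x
    show (φ (jb x)).re = -(φ x).im
    rw [hφ x]
    simp [Complex.mul_re]
  have key3 : ∀ x, u (ja x) = (φ x).im := by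
    intro x
    show (φ (ja x)).re = (φ x).im
    rw [key2 x]
    simp [Complex.mul_re]
  obtain ⟨v, hv⟩ := omega_surj ω hnd u
  have hvz : v = 0 := by
    by_contra hne
    have h1 : 0 < ω ![v, ja v] := hpa v hne
    have h2 : 0 < ω ![v, jb v] := hpb v hne
    have h3 : ω ![v, ja v] + ω ![v, jb v] = 0 := by
      rw [hv (ja v), hv (jb v), key3, key1]
      ring
    linarith
  have hu : ∀ x, u x = 0 := by
    intro x
    rw [← hv x, hvz]
    exact ω.map_coord_zero 0 rfl
  have hφ0 : φ = 0 := by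
    ext x
    have hre : (φ x).re = 0 := hu x
    have him : (φ x).im = 0 := by
      have := key1 x
      rw [hu (jb x)] at this
      linarith
    simp [Complex.ext_iff, hre, him]
  refine ⟨hφ0, ?_⟩
  ext x
  have := h x
  rw [hφ0] at this
  simp only [LinearMap.zero_apply, neg_eq_zero] at this ⊢
  have h2 : (starRingEnd ℂ) (ψ x) = 0 := by simpa using this.symm
  simpa using congrArg (starRingEnd ℂ) h2

end AuxNondeg

set_option maxHeartbeats 2000000

/-- `I_{j_b}⁻¹ ∘ Ψ_{j_a,j_b} ∘ I_{j_a}` is scalar multiplication by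
`det M(μ_a,μ_a) · det M(μ_a,μ_b)⁻¹`, i.e.
`Ψ_{j_a,j_b} (I_{j_a} γ) = (det M(μ_a,μ_a) · det M(μ_a,μ_b)⁻¹) • I_{j_b} γ`
for every `γ ∈ Λ^{n,0}_{j₀}E*`. -/
theorem statement11 {E : Type*} [AddCommGroup E] [Module ℝ E] [FiniteDimensional ℝ E]
    (n : ℕ) (hn : 0 < n) (ω : E [⋀^Fin 2]→ₗ[ℝ] ℝ)
    (hdim : Module.finrank ℝ E = 2 * n) (hnd : OmNondeg ω)
    (j₀ ja jb : E →ₗ[ℝ] E)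
    (hj₀ : IsCplxStruct j₀) (hja : IsCplxStruct ja) (hjb : IsCplxStruct jb)
    (hc₀ : OmCompat ω j₀) (hca : OmCompat ω ja) (hcb : OmCompat ω jb)
    (hp₀ : OmPos ω j₀) (hpa : OmPos ω ja) (hpb : OmPos ω jb)
    -- the maps `μ_a, μ_b` whose graphs are `Λ^{1,0}_{j_a}`, `Λ^{1,0}_{j_b}`
    (μa μb : Lam10 j₀ →ₗ[ℂ] Lam01 j₀)
    (hga : ∀ γ : E →ₗ[ℝ] ℂ, γ ∈ Lam10 ja ↔
      ∃ α : Lam10 j₀, γ = (α : E →ₗ[ℝ] ℂ) + ((μa α : E →ₗ[ℝ] ℂ)))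
    (hgb : ∀ γ : E →ₗ[ℝ] ℂ, γ ∈ Lam10 jb ↔
      ∃ α : Lam10 j₀, γ = (α : E →ₗ[ℝ] ℂ) + ((μb α : E →ₗ[ℝ] ℂ)))
    -- the conjugate map `μ̄_a`
    (μabar : Lam01 j₀ →ₗ[ℂ] Lam10 j₀)
    (hμabar : ∀ (α : Lam01 j₀) (β : Lam10 j₀),
      (β : E →ₗ[ℝ] ℂ) = conjForm (α : E →ₗ[ℝ] ℂ) →
        ((μabar α : E →ₗ[ℝ] ℂ)) = conjForm ((μa β : E →ₗ[ℝ] ℂ)))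
    -- the maps `I_{j_a}`, `I_{j_b}`, determined on `Λ^{n,0}_{j₀}E*` by their values
    -- on wedges of `(1,0)`-forms
    (Ija Ijb : (E [⋀^Fin n]→ₗ[ℝ] ℂ) →ₗ[ℂ] (E [⋀^Fin n]→ₗ[ℝ] ℂ))
    (hIamem : ∀ γ ∈ Lam j₀ n, Ija γ ∈ Lam ja n)
    (hIa : ∀ (f : Fin n → (E →ₗ[ℝ] ℂ)) (hf : ∀ i, f i ∈ Lam10 j₀),
      Ija (wedgeFam n f) =
        wedgeFam n (fun i => f i + ((μa ⟨f i, hf i⟩ : E →ₗ[ℝ] ℂ))))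
    (hIb : ∀ (f : Fin n → (E →ₗ[ℝ] ℂ)) (hf : ∀ i, f i ∈ Lam10 j₀),
      Ijb (wedgeFam n f) =
        wedgeFam n (fun i => f i + ((μb ⟨f i, hf i⟩ : E →ₗ[ℝ] ℂ))))
    -- the map `Ψ_{j_a,j_b}`
    (Ψab : Lam ja n →ₗ[ℂ] Lam jb n) (hΨab : PsiProp ω n ja jb Ψab) :
    ∀ (γ : E [⋀^Fin n]→ₗ[ℝ] ℂ) (hγ : γ ∈ Lam j₀ n),
      ((Ψab ⟨Ija γ, hIamem γ hγ⟩ : E [⋀^Fin n]→ₗ[ℝ] ℂ)) =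
        (LinearMap.det (Mmat j₀ μabar μa) * (LinearMap.det (Mmat j₀ μabar μb))⁻¹) •
          Ijb γ := by
  classical
  obtain ⟨b0, Δ0, e, hLam0, he_mem, he_eval, he_span⟩ := lam_package hn hdim j₀ hj₀
  obtain ⟨bb, Δb, eb, hLamb, -, -, -⟩ := lam_package hn hdim jb hjb
  set ebar : Fin n → (E →ₗ[ℝ] ℂ) := fun i => conjForm (e i) with hebar
  have hebar_mem : ∀ i, ebar i ∈ Lam01 j₀ := fun i => conjForm_mem_Lam01 (he_mem i)
  have hebar_eval : ∀ i k, ebar i (b0 k) = if i = k then 1 else 0 := by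
    intro i k
    show starRingEnd ℂ (e i (b0 k)) = _
    rw [he_eval]
    split <;> simp
  have indep_of_eval : ∀ (f : Fin n → (E →ₗ[ℝ] ℂ)),
      (∀ i k, f i (b0 k) = if i = k then 1 else 0) → LinearIndependent ℂ f := by
    intro f hf
    rw [Fintype.linearIndependent_iff]
    intro g hg k
    have h1 := DFunLike.congr_fun hg (b0 k)
    simp only [LinearMap.sum_apply, LinearMap.smul_apply, LinearMap.zero_apply,
      smul_eq_mul] at h1
    rw [Finset.sum_eq_single k] at h1
    · simpa [hf k k] using h1
    · intro i _ hik; rw [hf i k]; simp [hik]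
    · intro hk; exact absurd (Finset.mem_univ k) hk
  have hinde : LinearIndependent ℂ e := indep_of_eval e he_eval
  have hindebar : LinearIndependent ℂ ebar := indep_of_eval ebar hebar_eval
  have hcompl := isCompl_lam j₀ hj₀
  have hconj_sum : ∀ (c : Fin n → ℂ) (f : Fin n → (E →ₗ[ℝ] ℂ)),
      conjForm (∑ i, c i • f i) = ∑ i, (starRingEnd ℂ) (c i) • conjForm (f i) := by
    intro c f
    ext x
    simp [conjForm_apply, LinearMap.sum_apply, map_sum]
  -- basis of E →ₗ[ℝ] ℂ
  have hindB : LinearIndependent ℂ (Sum.elim e ebar) := by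
    refine hinde.sum_type hindebar ?_
    refine Disjoint.mono ?_ ?_ hcompl.disjoint
    · rw [Submodule.span_le]; rintro _ ⟨i, rfl⟩; exact he_mem i
    · rw [Submodule.span_le]; rintro _ ⟨i, rfl⟩; exact hebar_mem i
  have hspan10 : Lam10 j₀ ≤ Submodule.span ℂ (Set.range e) := by
    intro α hα
    rw [he_span α hα]
    exact Submodule.sum_mem _ fun i _ =>
      Submodule.smul_mem _ _ (Submodule.subset_span ⟨i, rfl⟩)
  have hspan01 : Lam01 j₀ ≤ Submodule.span ℂ (Set.range ebar) := by
    intro β hβ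
    have h1 := he_span (conjForm β) (conjForm_mem_Lam10 hβ)
    have h2 : β = ∑ i, (starRingEnd ℂ) ((conjForm β) (b0 i)) • ebar i := by
      conv_lhs => rw [← conjForm_conjForm β, h1]
      exact hconj_sum _ _
    rw [h2]
    exact Submodule.sum_mem _ fun i _ =>
      Submodule.smul_mem _ _ (Submodule.subset_span ⟨i, rfl⟩)
  have hspanB : ⊤ ≤ Submodule.span ℂ (Set.range (Sum.elim e ebar)) := by
    rw [Set.Sum.elim_range, Submodule.span_union, ← hcompl.sup_eq_top]
    exact sup_le_sup hspan10 hspan01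
  let B : Module.Basis (Fin n ⊕ Fin n) ℂ (E →ₗ[ℝ] ℂ) := Module.Basis.mk hindB hspanB
  have hBcoe : ⇑B = Sum.elim e ebar := Module.Basis.coe_mk _ _
  -- the conjugation operators
  let P := Submodule.prodEquivOfIsCompl _ _ hcompl
  have hT10 : ∀ (ν : Lam10 j₀ →ₗ[ℂ] Lam01 j₀) (x : Lam10 j₀),
      (P.toLinearMap ∘ₗ (Mmat j₀ μabar ν) ∘ₗ P.symm.toLinearMap) (x : E →ₗ[ℝ] ℂ)
        = (x : E →ₗ[ℝ] ℂ) + ((ν x : Lam01 j₀) : E →ₗ[ℝ] ℂ) := by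
    intro ν x
    show P (Mmat j₀ μabar ν (P.symm ↑x)) = _
    rw [Submodule.prodEquivOfIsCompl_symm_apply_left]
    have h1 : Mmat j₀ μabar ν (x, 0) = (x, ν x) := by
      simp [Mmat, LinearMap.prod_apply]
    rw [h1]
    exact Submodule.coe_prodEquivOfIsCompl' _ _ hcompl _
  have hT01 : ∀ (ν : Lam10 j₀ →ₗ[ℂ] Lam01 j₀) (y : Lam01 j₀),
      (P.toLinearMap ∘ₗ (Mmat j₀ μabar ν) ∘ₗ P.symm.toLinearMap) (y : E →ₗ[ℝ] ℂ)
        = ((μabar y : Lam10 j₀) : E →ₗ[ℝ] ℂ) + (y : E →ₗ[ℝ] ℂ) := by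
    intro ν y
    show P (Mmat j₀ μabar ν (P.symm ↑y)) = _
    rw [Submodule.prodEquivOfIsCompl_symm_apply_right]
    have h1 : Mmat j₀ μabar ν (0, y) = (μabar y, y) := by
      simp [Mmat, LinearMap.prod_apply]
    rw [h1]
    exact Submodule.coe_prodEquivOfIsCompl' _ _ hcompl _
  -- the families
  set Fa : Fin n → (E →ₗ[ℝ] ℂ) := fun i => e i + ((μa ⟨e i, he_mem i⟩ : E →ₗ[ℝ] ℂ)) with hFa
  set Fb : Fin n → (E →ₗ[ℝ] ℂ) := fun i => e i + ((μb ⟨e i, he_mem i⟩ : E →ₗ[ℝ] ℂ)) with hFb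
  set Ga : Fin n → (E →ₗ[ℝ] ℂ) :=
    fun i => ebar i + ((μabar ⟨ebar i, hebar_mem i⟩ : E →ₗ[ℝ] ℂ)) with hGa
  have hFa_mem : ∀ i, Fa i ∈ Lam10 ja := fun i => (hga _).mpr ⟨⟨e i, he_mem i⟩, rfl⟩
  have hFb_mem : ∀ i, Fb i ∈ Lam10 jb := fun i => (hgb _).mpr ⟨⟨e i, he_mem i⟩, rfl⟩
  have hconjFa : ∀ i, conjForm (Fa i) = Ga i := by
    intro i
    rw [hFa, hGa]
    simp only []
    rw [conjForm_add]
    congr 1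
    exact (hμabar ⟨ebar i, hebar_mem i⟩ ⟨e i, he_mem i⟩ (conjForm_conjForm (e i)).symm).symm
  -- the key wedge computation
  set Θ : E [⋀^Fin (n + n)]→ₗ[ℝ] ℂ :=
    (detF (Sum.elim e ebar)).domDomCongr finSumFinEquiv with hΘ
  have hTB : ∀ (ν : Lam10 j₀ →ₗ[ℂ] Lam01 j₀) (Fν : Fin n → (E →ₗ[ℝ] ℂ)),
      (∀ i, Fν i = e i + ((ν ⟨e i, he_mem i⟩ : E →ₗ[ℝ] ℂ))) →
      Sum.elim Fν Ga = fun k =>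
        (P.toLinearMap ∘ₗ (Mmat j₀ μabar ν) ∘ₗ P.symm.toLinearMap) (B k) := by
    intro ν Fν hFν
    funext k
    rcases k with i | i
    · rw [Sum.elim_inl, hFν i]
      have hB1 : B (Sum.inl i) = e i := by rw [show B (Sum.inl i) = (Sum.elim e ebar) (Sum.inl i) from congrFun hBcoe _]; rfl
      rw [hB1]
      exact (hT10 ν ⟨e i, he_mem i⟩).symm
    · rw [Sum.elim_inr]
      have hB1 : B (Sum.inr i) = ebar i := by rw [show B (Sum.inr i) = (Sum.elim e ebar) (Sum.inr i) from congrFun hBcoe _]; rfl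
      rw [hB1, hT01 ν ⟨ebar i, hebar_mem i⟩]
      rw [hGa]
      simp only []
      rw [add_comm]
  have hwedge : ∀ (ν : Lam10 j₀ →ₗ[ℂ] Lam01 j₀) (Fν : Fin n → (E →ₗ[ℝ] ℂ)),
      (∀ i, Fν i = e i + ((ν ⟨e i, he_mem i⟩ : E →ₗ[ℝ] ℂ))) →
      wedgeC (detF Fν) (detF Ga) = LinearMap.det (Mmat j₀ μabar ν) • Θ := by
    intro ν Fν hFν
    rw [wedgeC_detF, hTB ν Fν hFν, detF_comp_basis B, hBcoe,
      AlternatingMap.domDomCongr_smul, LinearMap.det_conj, hΘ]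
  -- basic forms
  set γ₀ : E [⋀^Fin n]→ₗ[ℝ] ℂ := detF e with hγ₀
  have hγ₀mem : γ₀ ∈ Lam j₀ n := detF_mem_lam j₀ e he_mem
  have hIjaγ₀ : Ija γ₀ = detF Fa := by
    rw [hγ₀, ← wedgeFam_eq_detF n e, hIa e he_mem, wedgeFam_eq_detF]
  have hIjbγ₀ : Ijb γ₀ = detF Fb := by
    rw [hγ₀, ← wedgeFam_eq_detF n e, hIb e he_mem, wedgeFam_eq_detF]
  have hGaconj : conjAlt (detF Fa) = detF Ga := by
    rw [conjAlt_detF]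
    congr 1
    funext i
    exact hconjFa i
  -- nonvanishing
  have hindBG : LinearIndependent ℂ (Sum.elim Fb Ga) := by
    rw [Fintype.linearIndependent_iff]
    intro g hg
    rw [Fintype.sum_sum_type] at hg
    set φ : E →ₗ[ℝ] ℂ := ∑ i, g (Sum.inl i) • Fb i with hφdef
    set χ : E →ₗ[ℝ] ℂ := ∑ i, (starRingEnd ℂ) (g (Sum.inr i)) • Fa i with hχdef
    have hφmem : φ ∈ Lam10 jb :=
      Submodule.sum_mem _ fun i _ => Submodule.smul_mem _ _ (hFb_mem i)
    have hχmem : χ ∈ Lam10 ja :=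
      Submodule.sum_mem _ fun i _ => Submodule.smul_mem _ _ (hFa_mem i)
    have hconjχ : conjForm χ = ∑ i, g (Sum.inr i) • Ga i := by
      rw [hχdef, hconj_sum]
      refine Finset.sum_congr rfl fun i _ => ?_
      rw [Complex.conj_conj, hconjFa i]
    have hsum0 : φ + conjForm χ = 0 := by rw [hconjχ, hφdef]; exact hg
    obtain ⟨hφ0, hχ0⟩ := cancel_10 ω hnd ja jb hpa hpb hφmem hχmem (by
      intro x
      have h1 := DFunLike.congr_fun hsum0 x
      simp only [LinearMap.add_apply, LinearMap.zero_apply] at h1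
      rw [conjForm_apply] at h1
      linear_combination h1)
    -- extract the coefficients
    have hext : ∀ (c : Fin n → ℂ) (ν : Lam10 j₀ →ₗ[ℂ] Lam01 j₀)
        (Fν : Fin n → (E →ₗ[ℝ] ℂ)),
        (∀ i, Fν i = e i + ((ν ⟨e i, he_mem i⟩ : E →ₗ[ℝ] ℂ))) →
        (∑ i, c i • Fν i) = 0 → ∀ i, c i = 0 := by
      intro c ν Fν hFν h0
      have hsplit : (∑ i, c i • e i) + (∑ i, c i • ((ν ⟨e i, he_mem i⟩ : E →ₗ[ℝ] ℂ))) = 0 := by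
        rw [← Finset.sum_add_distrib, ← h0]
        refine Finset.sum_congr rfl fun i _ => ?_
        rw [hFν i, smul_add]
      have hX10 : (∑ i, c i • e i) ∈ Lam10 j₀ :=
        Submodule.sum_mem _ fun i _ => Submodule.smul_mem _ _ (he_mem i)
      have hX01 : (∑ i, c i • ((ν ⟨e i, he_mem i⟩ : E →ₗ[ℝ] ℂ))) ∈ Lam01 j₀ :=
        Submodule.sum_mem _ fun i _ => Submodule.smul_mem _ _ (ν _).2
      have hX0 : (∑ i, c i • e i) = 0 := by
        have hmem2 : (∑ i, c i • e i) ∈ Lam01 j₀ := by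
          have : (∑ i, c i • e i) = -(∑ i, c i • ((ν ⟨e i, he_mem i⟩ : E →ₗ[ℝ] ℂ))) := by
            rw [eq_neg_iff_add_eq_zero]
            exact hsplit
          rw [this]
          exact Submodule.neg_mem _ hX01
        exact Submodule.disjoint_def.mp hcompl.disjoint _ hX10 hmem2
      exact Fintype.linearIndependent_iff.mp hinde c hX0
    have hl : ∀ i, g (Sum.inl i) = 0 := hext _ μb Fb (fun i => rfl) hφ0
    have hr : ∀ i, g (Sum.inr i) = 0 := by
      intro i
      have := hext _ μa Fa (fun i => rfl) hχ0 i
      simpa using congrArg (starRingEnd ℂ) this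
    intro k
    rcases k with i | i
    · exact hl i
    · exact hr i
  have hWb : wedgeC (detF Fb) (detF Ga) = LinearMap.det (Mmat j₀ μabar μb) • Θ :=
    hwedge μb Fb fun i => rfl
  have hWbne : wedgeC (detF Fb) (detF Ga) ≠ 0 := by
    rw [wedgeC_detF]
    intro h
    have h2 : detF (Sum.elim Fb Ga) = (0 : E [⋀^(Fin n ⊕ Fin n)]→ₗ[ℝ] ℂ) := by
      rw [← AlternatingMap.domDomCongr_eq_iff finSumFinEquiv]
      rw [h]
      ext v
      simp
    refine detF_ne_zero_of_linearIndependent ?_ hindBG h2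
    rw [hdim]
    simp
    omega
  have hdetMb_ne : LinearMap.det (Mmat j₀ μabar μb) ≠ 0 := by
    intro h
    rw [hWb, h, zero_smul] at hWbne
    exact hWbne rfl
  have hΘne : Θ ≠ 0 := by
    intro h
    rw [hWb, h, smul_zero] at hWbne
    exact hWbne rfl
  -- scalar extraction
  set x₀ : Lam ja n := ⟨Ija γ₀, hIamem γ₀ hγ₀mem⟩ with hx₀
  have hΨmem : (Ψab x₀ : E [⋀^Fin n]→ₗ[ℝ] ℂ) ∈ Lam jb n := (Ψab x₀).2
  have hIjbmem : Ijb γ₀ ∈ Lam jb n := by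
    rw [hIjbγ₀]
    exact detF_mem_lam jb Fb hFb_mem
  set t : ℂ := (Ψab x₀ : E [⋀^Fin n]→ₗ[ℝ] ℂ) bb with ht
  set s : ℂ := (Ijb γ₀) bb with hs
  have h1 : (Ψab x₀ : E [⋀^Fin n]→ₗ[ℝ] ℂ) = t • Δb := hLamb _ hΨmem
  have h2 : Ijb γ₀ = s • Δb := hLamb _ hIjbmem
  have hs_ne : s ≠ 0 := by
    intro h0
    have : Ijb γ₀ = 0 := by rw [h2, h0, zero_smul]
    rw [hIjbγ₀] at this
    rw [this, wedgeC_zero_left] at hWbne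
    exact hWbne rfl
  have hx₀ψ : (Ψab x₀ : E [⋀^Fin n]→ₗ[ℝ] ℂ) = (t * s⁻¹) • Ijb γ₀ := by
    rw [h1, h2, smul_smul, mul_assoc, inv_mul_cancel₀ hs_ne, mul_one]
  -- pairing of the Ψ image
  have hWa : wedgeC (detF Fa) (detF Ga) = LinearMap.det (Mmat j₀ μabar μa) • Θ :=
    hwedge μa Fa fun i => rfl
  have hpair : wedgeC ((Ψab x₀ : E [⋀^Fin n]→ₗ[ℝ] ℂ)) (detF Ga)
      = LinearMap.det (Mmat j₀ μabar μa) • Θ := by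
    have hψ := hΨab x₀ x₀
    rw [show ((x₀ : Lam ja n) : E [⋀^Fin n]→ₗ[ℝ] ℂ) = Ija γ₀ from rfl] at hψ
    rw [hIjaγ₀, hGaconj] at hψ
    rw [hψ, hWa]
  -- compute the pairing of the Ψ image via the smul trick
  set i0 : Fin n := ⟨0, hn⟩ with hi0
  have hupdF : (t * s⁻¹) • detF Fb = detF (Function.update Fb i0 ((t * s⁻¹) • Fb i0)) :=
    (detF_update_smul Fb i0 (t * s⁻¹)).symm
  have hSumUpd : Sum.elim (Function.update Fb i0 ((t * s⁻¹) • Fb i0)) Ga =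
      Function.update (Sum.elim Fb Ga) (Sum.inl i0)
        ((t * s⁻¹) • (Sum.elim Fb Ga (Sum.inl i0))) := by
    funext k
    rcases k with i | i
    · simp only [Sum.elim_inl, Function.update_apply, Sum.inl.injEq]
    · rw [Sum.elim_inr, Function.update_apply]
      simp
  have hpair2 : wedgeC ((Ψab x₀ : E [⋀^Fin n]→ₗ[ℝ] ℂ)) (detF Ga)
      = ((t * s⁻¹) * LinearMap.det (Mmat j₀ μabar μb)) • Θ := by
    rw [hx₀ψ, hIjbγ₀, hupdF, wedgeC_detF, hSumUpd, detF_update_smul,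
      AlternatingMap.domDomCongr_smul, ← wedgeC_detF, hWb, smul_smul]
  -- conclude the scalar identity
  have hscal : LinearMap.det (Mmat j₀ μabar μa) = (t * s⁻¹) * LinearMap.det (Mmat j₀ μabar μb) := by
    have := hpair.symm.trans hpair2
    by_contra hne
    have h3 : (LinearMap.det (Mmat j₀ μabar μa) - (t * s⁻¹) * LinearMap.det (Mmat j₀ μabar μb)) • Θ = 0 := by
      rw [sub_smul, this, sub_self]
    rcases smul_eq_zero.mp h3 with h4 | h4
    · exact hne (by linear_combination h4)
    · exact hΘne h4
  have hts : t * s⁻¹ = LinearMap.det (Mmat j₀ μabar μa) * (LinearMap.det (Mmat j₀ μabar μb))⁻¹ := by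
    rw [hscal]
    field_simp
  have hkey : (Ψab x₀ : E [⋀^Fin n]→ₗ[ℝ] ℂ) =
      (LinearMap.det (Mmat j₀ μabar μa) * (LinearMap.det (Mmat j₀ μabar μb))⁻¹) • Ijb γ₀ := by
    rw [hx₀ψ, hts]
  -- now the general case
  intro γ hγ
  have hγeq : γ = (γ b0) • γ₀ := by
    have hA := hLam0 γ hγ
    have hB2 := hLam0 γ₀ hγ₀mem
    have hone : γ₀ b0 = 1 := by
      rw [hγ₀, detF_apply]
      rw [show (Matrix.of fun i j => e j (b0 i)) = (1 : Matrix (Fin n) (Fin n) ℂ) from by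
        ext i j
        rw [Matrix.of_apply, he_eval j i, Matrix.one_apply]
        simp [eq_comm]]
      exact Matrix.det_one
    rw [hone, one_smul] at hB2
    conv_lhs => rw [hA]
    rw [← hB2]
  have hsub : (⟨Ija γ, hIamem γ hγ⟩ : Lam ja n) = (γ b0) • x₀ := by
    apply Subtype.ext
    rw [hx₀]
    show Ija γ = (γ b0) • Ija γ₀
    rw [← map_smul, ← hγeq]
  rw [hsub, map_smul]
  show (γ b0) • (Ψab x₀ : E [⋀^Fin n]→ₗ[ℝ] ℂ) = _
  conv_rhs => rw [hγeq]
  rw [hkey, map_smul]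
  exact smul_comm _ _ _

end
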